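/- arXiv:2411.19696 — 4 statements merged into one kernel-verified Lean document; each statement's English description precedes it below -/
import Mathlib

section
/- Let G be a bipartite graph with parts V1 and V2 of equal size. Suppose that either |V1| = 1 and G is connected, or |V1| > 1 and for every nonempty proper subset W ⊂ V1 one has |W| < |N(G;W)|. Then det(z_G) is a nonzero irreducible polynomial in the variables z_{ij} over any field. -/
open MvPolynomial

/-- **Edmonds matrix** over a field `K`. -/
noncomputable def edmondsMatrix (K : Type) [Field K] {ι : Type} [Fintype ι] [DecidableEq ι]
    (E : ι → ι → Prop) [DecidableRel E] :
    Matrix ι ι (MvPolynomial (ι × ι) K) :=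
  Matrix.of fun i j => if E i j then (X (i, j) : MvPolynomial (ι × ι) K) else 0


namespace EdmondsAux

variable {V : Type} {R : Type} [CommRing R]

/-- weight of a monomial exponent -/
def mwt (w : V → ℕ) (m : V →₀ ℕ) : ℕ := m.sum fun v k => w v * k

/-- weighted degree -/
def wdeg (w : V → ℕ) (p : MvPolynomial V R) : ℕ := p.support.sup (mwt w)

noncomputable def wphi (w : V → ℕ) : MvPolynomial V R →+* Polynomial (MvPolynomial V R) :=
  MvPolynomial.eval₂Hom (Polynomial.C.comp MvPolynomial.C)
    (fun v => Polynomial.X ^ w v * Polynomial.C (MvPolynomial.X v))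

lemma wphi_X (w : V → ℕ) (v : V) :
    wphi w (X v : MvPolynomial V R) = Polynomial.X ^ w v * Polynomial.C (X v) := by
  simp [wphi]

lemma wphi_monomial (w : V → ℕ) (m : V →₀ ℕ) (c : R) :
    wphi w (monomial m c) = Polynomial.monomial (mwt w m) (monomial m c) := by
  classical
  rw [wphi, eval₂Hom_monomial]
  have h1 : (m.prod fun v e => (Polynomial.X ^ w v * Polynomial.C (MvPolynomial.X v)) ^ e :
      Polynomial (MvPolynomial V R))
      = Polynomial.X ^ (mwt w m) * Polynomial.C (m.prod fun v e => MvPolynomial.X v ^ e) := by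
    rw [Finsupp.prod, Finsupp.prod]
    simp only [mul_pow, ← pow_mul]
    rw [Finset.prod_mul_distrib, Finset.prod_pow_eq_pow_sum]
    congr 1
    · simp only [← map_pow, ← map_prod]
  rw [h1, monomial_eq, RingHom.coe_comp, Function.comp_apply, mul_left_comm,
    ← Polynomial.C_mul, ← Polynomial.C_mul_X_pow_eq_monomial, mul_comm]

lemma wphi_coeff (w : V → ℕ) (p : MvPolynomial V R) (k : ℕ) :
    (wphi w p).coeff k =
      ∑ m ∈ p.support.filter (fun m => mwt w m = k), monomial m (coeff m p) := by
  classical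
  conv_lhs => rw [p.as_sum, map_sum, Polynomial.finset_sum_coeff]
  rw [Finset.sum_filter]
  refine Finset.sum_congr rfl fun m _ => ?_
  rw [wphi_monomial, Polynomial.coeff_monomial]

lemma wphi_coeff_wdeg_ne_zero (w : V → ℕ) {p : MvPolynomial V R} (hp : p ≠ 0) :
    (wphi w p).coeff (wdeg w p) ≠ 0 := by
  classical
  obtain ⟨m₀, hm₀, hsup⟩ := Finset.exists_mem_eq_sup p.support
    (MvPolynomial.support_nonempty.mpr hp) (mwt w)
  rw [wphi_coeff]
  intro h
  have := congrArg (coeff m₀) h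
  rw [coeff_sum] at this
  simp only [coeff_monomial, coeff_zero] at this
  rw [Finset.sum_eq_single m₀] at this
  · rw [if_pos rfl] at this
    exact (mem_support_iff.mp hm₀) this
  · intro b _ hb
    rw [if_neg (by exact fun hh => hb hh)]
  · intro hm
    exact absurd (Finset.mem_filter.mpr ⟨hm₀, hsup.symm⟩) hm

lemma wphi_ne_zero (w : V → ℕ) {p : MvPolynomial V R} (hp : p ≠ 0) : wphi w p ≠ 0 := by
  intro h
  exact wphi_coeff_wdeg_ne_zero w hp (by rw [h, Polynomial.coeff_zero])

lemma natDegree_wphi (w : V → ℕ) {p : MvPolynomial V R} (hp : p ≠ 0) :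
    (wphi w p).natDegree = wdeg w p := by
  classical
  refine le_antisymm ?_ (Polynomial.le_natDegree_of_ne_zero (wphi_coeff_wdeg_ne_zero w hp))
  rw [Polynomial.natDegree_le_iff_coeff_eq_zero]
  intro k hk
  rw [wphi_coeff]
  refine Finset.sum_eq_zero fun m hm => ?_
  obtain ⟨hm1, hm2⟩ := Finset.mem_filter.mp hm
  have h2 : k ≤ wdeg w p := hm2 ▸ Finset.le_sup (f := mwt w) hm1
  omega

lemma wdeg_mul [IsDomain R] (w : V → ℕ) {p q : MvPolynomial V R} (hp : p ≠ 0) (hq : q ≠ 0) :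
    wdeg w (p * q) = wdeg w p + wdeg w q := by
  rw [← natDegree_wphi w hp, ← natDegree_wphi w hq, ← natDegree_wphi w (mul_ne_zero hp hq),
    map_mul, Polynomial.natDegree_mul (wphi_ne_zero w hp) (wphi_ne_zero w hq)]

lemma wdeg_one (w : V → ℕ) : wdeg w (1 : MvPolynomial V R) = 0 := by
  classical
  refine Nat.le_zero.mp (Finset.sup_le fun m hm => ?_)
  have hm0 : m = 0 := by
    by_contra h0
    have := mem_support_iff.mp hm
    rw [MvPolynomial.coeff_one, if_neg (fun hh => h0 hh.symm)] at this
    exact this rfl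
  simp [hm0, mwt]

lemma one_le_wdeg {w : V → ℕ} {p : MvPolynomial V R} {m : V →₀ ℕ} {v : V}
    (hm : m ∈ p.support) (hw : w v ≠ 0) (hv : m v ≠ 0) : 1 ≤ wdeg w p := by
  refine le_trans ?_ (Finset.le_sup (f := mwt w) hm)
  have hvs : v ∈ m.support := Finsupp.mem_support_iff.mpr hv
  calc 1 ≤ w v * m v := Nat.one_le_iff_ne_zero.mpr (Nat.mul_ne_zero hw hv)
  _ ≤ mwt w m := Finset.single_le_sum (f := fun v => w v * m v) (fun _ _ => Nat.zero_le _) hvs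

lemma eq_C_of_wdeg_eq_zero {I : Type} {w : I → V → ℕ} {p : MvPolynomial V R}
    (h : ∀ i, wdeg (w i) p = 0) (hw : ∀ v, ∃ i, w i v ≠ 0) :
    p = C (coeff 0 p) := by
  classical
  have hsupp : ∀ m ∈ p.support, m = 0 := by
    intro m hm
    by_contra hm0
    obtain ⟨v, hv⟩ := Finsupp.ne_iff.mp hm0
    obtain ⟨i, hi⟩ := hw v
    have h1 := one_le_wdeg (w := w i) hm hi (by simpa using hv)
    have h0 := h i
    omega
  ext m
  by_cases hm : m = 0
  · simp [hm]
  · rw [coeff_C, if_neg (fun hh => hm hh.symm)]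
    by_contra hc
    exact hm (hsupp m (mem_support_iff.mpr hc))


end EdmondsAux


namespace EdmondsAux
section Det

variable {ι : Type} [Fintype ι] [DecidableEq ι]

/-- the exponent of the monomial attached to a permutation -/
noncomputable def msig (σ : Equiv.Perm ι) : ι × ι →₀ ℕ := ∑ c : ι, Finsupp.single (σ c, c) 1

lemma msig_apply (σ : Equiv.Perm ι) (i c : ι) :
    msig σ (i, c) = if σ c = i then 1 else 0 := by
  classical
  rw [msig, Finsupp.finset_sum_apply]
  rw [Finset.sum_eq_single c]
  · simp [Finsupp.single_apply, Prod.ext_iff]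
  · intro b _ hb
    simp [Finsupp.single_apply, Prod.ext_iff, hb]
  · simp

lemma msig_inj {σ τ : Equiv.Perm ι} (h : msig σ = msig τ) : σ = τ := by
  ext c
  have h2 := DFunLike.congr_fun h (τ c, c)
  rw [msig_apply, msig_apply, if_pos rfl] at h2
  by_contra hne
  rw [if_neg hne] at h2
  exact one_ne_zero h2.symm

variable {K : Type} [Field K]

lemma prod_X_eq_monomial {γ : Type} [DecidableEq γ] (s : Finset γ) (f : γ → ι × ι) :
    (∏ c ∈ s, (X (f c) : MvPolynomial (ι × ι) K)) =
      monomial (∑ c ∈ s, Finsupp.single (f c) 1) 1 := by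
  induction s using Finset.induction with
  | empty => simp
  | @insert a s h ih =>
    rw [Finset.prod_insert h, Finset.sum_insert h, ih]
    have hX : (X (f a) : MvPolynomial (ι × ι) K) = monomial (Finsupp.single (f a) 1) 1 := rfl
    rw [hX, monomial_mul, one_mul]

variable (E : ι → ι → Prop) [DecidableRel E] (K)

lemma det_term (σ : Equiv.Perm ι) :
    (∏ c : ι, edmondsMatrix K E (σ c) c) =
      if (∀ c, E (σ c) c) then monomial (msig σ) 1 else 0 := by
  classical
  split_ifs with h
  · unfold msig
    rw [← prod_X_eq_monomial Finset.univ (fun c => (σ c, c))]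
    exact Finset.prod_congr rfl fun c _ => by simp [edmondsMatrix, h c]
  · push_neg at h
    obtain ⟨c, hc⟩ := h
    exact Finset.prod_eq_zero (Finset.mem_univ c) (by simp [edmondsMatrix, hc])

lemma coeff_det_matching {σ : Equiv.Perm ι} (hσ : ∀ c, E (σ c) c) :
    coeff (msig σ) (edmondsMatrix K E).det = ((Equiv.Perm.sign σ : ℤ) : K) := by
  classical
  rw [Matrix.det_apply', coeff_sum]
  rw [Finset.sum_eq_single σ]
  · rw [det_term, if_pos hσ, ← map_intCast (C : K →+* MvPolynomial (ι × ι) K), coeff_C_mul,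
      coeff_monomial, if_pos rfl, mul_one]
  · intro τ _ hτ
    rw [det_term]
    split_ifs with h
    · rw [← map_intCast (C : K →+* MvPolynomial (ι × ι) K), coeff_C_mul, coeff_monomial,
        if_neg (fun hh => hτ (msig_inj hh)), mul_zero]
    · rw [mul_zero, coeff_zero]
  · intro hs
    exact absurd (Finset.mem_univ σ) hs


lemma sign_cast_ne_zero (σ : Equiv.Perm ι) : ((Equiv.Perm.sign σ : ℤ) : K) ≠ 0 := by
  rcases Int.units_eq_one_or (Equiv.Perm.sign σ) with h | h <;> rw [h] <;> norm_num

lemma msig_mem_support {σ : Equiv.Perm ι} (hσ : ∀ c, E (σ c) c) :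
    msig σ ∈ (edmondsMatrix K E).det.support :=
  mem_support_iff.mpr (by rw [coeff_det_matching]; exacts [sign_cast_ne_zero (K := K) σ, hσ])

lemma det_ne_zero {σ : Equiv.Perm ι} (hσ : ∀ c, E (σ c) c) :
    (edmondsMatrix K E).det ≠ 0 := fun h => by
  simpa [h] using msig_mem_support K E hσ

/-- row weight -/
def wrow (i₀ : ι) : ι × ι → ℕ := fun v => if v.1 = i₀ then 1 else 0

/-- column weight -/
def wcol (j₀ : ι) : ι × ι → ℕ := fun v => if v.2 = j₀ then 1 else 0

lemma wdeg_row_det (i₀ : ι) (hdet : (edmondsMatrix K E).det ≠ 0) :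
    wdeg (wrow i₀) (edmondsMatrix K E).det = 1 := by
  classical
  rw [← natDegree_wphi _ hdet, RingHom.map_det, RingHom.mapMatrix_apply]
  have hmap : (edmondsMatrix K E).map (wphi (wrow i₀)) =
      Matrix.updateRow ((edmondsMatrix K E).map (Polynomial.C)) i₀
        ((Polynomial.X : Polynomial (MvPolynomial (ι × ι) K)) • ((edmondsMatrix K E).map (Polynomial.C) i₀)) := by
    refine Matrix.ext fun i j => ?_
    simp only [Matrix.map_apply, Matrix.updateRow_apply, Pi.smul_apply, smul_eq_mul,
      edmondsMatrix, Matrix.of_apply]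
    rcases eq_or_ne i i₀ with hi | hi
    · subst hi
      by_cases hE : E i j <;> simp [hE, wphi_X, wrow]
    · by_cases hE : E i j <;> simp [hi, hE, wphi_X, wrow]
  rw [hmap, Matrix.det_updateRow_smul, Matrix.updateRow_eq_self, ← RingHom.mapMatrix_apply,
    ← RingHom.map_det, mul_comm, Polynomial.natDegree_C_mul_X _ hdet]

lemma wdeg_col_det (j₀ : ι) (hdet : (edmondsMatrix K E).det ≠ 0) :
    wdeg (wcol j₀) (edmondsMatrix K E).det = 1 := by
  classical
  rw [← natDegree_wphi _ hdet, RingHom.map_det, RingHom.mapMatrix_apply]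
  have hmap : (edmondsMatrix K E).map (wphi (wcol j₀)) =
      Matrix.updateCol ((edmondsMatrix K E).map (Polynomial.C)) j₀
        ((Polynomial.X : Polynomial (MvPolynomial (ι × ι) K)) • (fun i => (edmondsMatrix K E).map (Polynomial.C) i j₀)) := by
    refine Matrix.ext fun i j => ?_
    simp only [Matrix.map_apply, Matrix.updateCol_apply, Pi.smul_apply, smul_eq_mul,
      edmondsMatrix, Matrix.of_apply]
    rcases eq_or_ne j j₀ with hj | hj
    · subst hj
      by_cases hE : E i j <;> simp [hE, wphi_X, wcol]
    · by_cases hE : E i j <;> simp [hj, hE, wphi_X, wcol]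
  rw [hmap, Matrix.det_updateCol_smul, Matrix.updateCol_eq_self, ← RingHom.mapMatrix_apply,
    ← RingHom.map_det, mul_comm, Polynomial.natDegree_C_mul_X _ hdet]

/-- Existence of a perfect matching through any given edge, under the strict Hall
condition. -/
lemma exists_matching
    (hhall : ∀ W : Finset ι, W.Nonempty → W ≠ Finset.univ →
      W.card < (Finset.univ.filter fun j => ∃ i ∈ W, E i j).card)
    {i₀ j₀ : ι} (hE : E i₀ j₀) :
    ∃ σ : Equiv.Perm ι, σ j₀ = i₀ ∧ ∀ c, E (σ c) c := by
  classical
  set t : ι → Finset ι := fun i => if i = i₀ then {j₀} else Finset.univ.filter (E i ·) with ht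
  have hall : ∀ s : Finset ι, s.card ≤ (s.biUnion t).card := by
    intro s
    by_cases hi₀ : i₀ ∈ s
    · set s' := s.erase i₀ with hs'
      rcases s'.eq_empty_or_nonempty with he | hne
      · have hs1 : s = {i₀} := by
          ext x
          simp only [Finset.mem_singleton]
          constructor
          · intro hx
            by_contra hxne
            exact absurd (Finset.mem_erase.mpr ⟨hxne, hx⟩) (by simp [← hs', he])
          · rintro rfl; exact hi₀
        have : j₀ ∈ s.biUnion t := Finset.mem_biUnion.mpr ⟨i₀, hi₀, by simp [ht]⟩
        calc s.card = 1 := by rw [hs1, Finset.card_singleton]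
        _ ≤ (s.biUnion t).card := Finset.card_pos.mpr ⟨j₀, this⟩
      · have hne' : s' ≠ Finset.univ := fun h => by
          have := Finset.mem_univ i₀
          rw [← h] at this
          exact (Finset.notMem_erase i₀ s) this
        have hlt := hhall s' hne hne'
        have hsub : (Finset.univ.filter fun j => ∃ i ∈ s', E i j) ⊆ s.biUnion t := by
          intro j hj
          obtain ⟨i, his', hij⟩ := (Finset.mem_filter.mp hj).2
          have hii₀ : i ≠ i₀ := (Finset.mem_erase.mp his').1
          exact Finset.mem_biUnion.mpr ⟨i, Finset.mem_of_mem_erase his',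
            by simp [ht, hii₀, hij]⟩
        have hpos : 0 < s.card := Finset.card_pos.mpr ⟨i₀, hi₀⟩
        have hcards : s'.card = s.card - 1 := by
          rw [hs']; exact Finset.card_erase_of_mem hi₀
        have := Finset.card_le_card hsub
        omega
    · rcases s.eq_empty_or_nonempty with he | hne
      · simp [he]
      · have hne' : s ≠ Finset.univ := fun h => hi₀ (h ▸ Finset.mem_univ i₀)
        have hlt := hhall s hne hne'
        have hsub : (Finset.univ.filter fun j => ∃ i ∈ s, E i j) ⊆ s.biUnion t := by
          intro j hj
          obtain ⟨i, his, hij⟩ := (Finset.mem_filter.mp hj).2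
          have hii₀ : i ≠ i₀ := fun h => hi₀ (h ▸ his)
          exact Finset.mem_biUnion.mpr ⟨i, his, by simp [ht, hii₀, hij]⟩
        have := Finset.card_le_card hsub
        omega
  obtain ⟨f, hfinj, hft⟩ := (Finset.all_card_le_biUnion_card_iff_exists_injective t).mp hall
  have hfbij : Function.Bijective f := Finite.injective_iff_bijective.mp hfinj
  set τ : Equiv.Perm ι := Equiv.ofBijective f hfbij with hτ
  have hτi₀ : τ i₀ = j₀ := by
    have := hft i₀
    simpa [ht, hτ, Equiv.ofBijective] using this
  refine ⟨τ.symm, by rw [← hτi₀, Equiv.symm_apply_apply], fun c => ?_⟩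
  by_cases hc : τ.symm c = i₀
  · rw [hc]
    have : c = j₀ := by rw [← hτi₀, ← hc, Equiv.apply_symm_apply]
    rw [this]; exact hE
  · have hmem := hft (τ.symm c)
    simp only [ht] at hmem
    rw [if_neg hc] at hmem
    have hfc : f (τ.symm c) = c := by
      have : τ (τ.symm c) = c := Equiv.apply_symm_apply τ c
      simpa [hτ, Equiv.ofBijective] using this
    rw [hfc] at hmem
    exact (Finset.mem_filter.mp hmem).2


lemma isUnit_of_eq_C {V : Type} {p : MvPolynomial V K} (hp : p ≠ 0)
    (h : p = C (coeff 0 p)) : IsUnit p := by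
  rw [h]
  exact IsUnit.map C (isUnit_iff_ne_zero.mpr fun h0 => hp (by rw [h, h0, map_zero]))

end Det
end EdmondsAux


open EdmondsAux in
/-- Condition (∗): either `|V1| = 1` and the graph is connected (i.e. its unique
possible edge is present), or `|V1| > 1` and every nonempty proper subset `W` of the
left part satisfies the strict Hall condition `|W| < |N(G;W)|`. Under this condition
the determinant of the Edmonds matrix is a nonzero irreducible polynomial over any
field. -/
theorem edmondsMatrix_det_irreducible_of_star
    {ι : Type} [Fintype ι] [DecidableEq ι] (E : ι → ι → Prop) [DecidableRel E]
    (hstar :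
      (Fintype.card ι = 1 ∧ ∀ i j : ι, E i j) ∨
      (1 < Fintype.card ι ∧ ∀ W : Finset ι, W.Nonempty → W ≠ Finset.univ →
        W.card < (Finset.univ.filter fun j => ∃ i ∈ W, E i j).card)) :
    ∀ (K : Type) [Field K],
      (edmondsMatrix K E).det ≠ 0 ∧ Irreducible (edmondsMatrix K E).det := by
  classical
  intro K _
  rcases hstar with ⟨hcard, hconn⟩ | ⟨hcard, hhall⟩
  · -- one-vertex case : the determinant is a variable
    obtain ⟨i, hi⟩ := Fintype.card_eq_one_iff.mp hcard
    letI : Unique ι := ⟨⟨i⟩, hi⟩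
    have hdet : (edmondsMatrix K E).det = X (default, default) := by
      rw [Matrix.det_unique]
      simp [edmondsMatrix, hconn]
    have hX0 : (X (default, default) : MvPolynomial (ι × ι) K) ≠ 0 := X_ne_zero _
    rw [hdet]
    refine ⟨hX0, ?_, ?_⟩
    · -- not a unit
      intro hu
      obtain ⟨q, hq⟩ := hu.exists_right_inv
      have hq0 : q ≠ 0 := fun h => by simp [h] at hq
      have hdd := wdeg_mul (fun _ => (1:ℕ)) hX0 hq0
      rw [hq, wdeg_one] at hdd
      have hX1 : wdeg (fun _ => (1:ℕ)) (X (default, default) : MvPolynomial (ι × ι) K) = 1 := by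
        rw [wdeg, support_X, Finset.sup_singleton, mwt, Finsupp.sum_single_index] <;> simp
      omega
    · -- factors
      intro f g hfg
      have hf0 : f ≠ 0 := fun h => hX0 (by rw [hfg, h, zero_mul])
      have hg0 : g ≠ 0 := fun h => hX0 (by rw [hfg, h, mul_zero])
      have hdd := wdeg_mul (fun _ => (1:ℕ)) hf0 hg0
      rw [← hfg] at hdd
      have hX1 : wdeg (fun _ => (1:ℕ)) (X (default, default) : MvPolynomial (ι × ι) K) = 1 := by
        rw [wdeg, support_X, Finset.sup_singleton, mwt, Finsupp.sum_single_index] <;> simp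
      rw [hX1] at hdd
      rcases Nat.eq_zero_or_pos (wdeg (fun _ => (1:ℕ)) f) with h0 | h1
      · left
        refine isUnit_of_eq_C (K := K) hf0 (eq_C_of_wdeg_eq_zero (I := Unit) (w := fun _ => fun _ => 1)
          (fun _ => h0) (fun v => ⟨⟨⟩, one_ne_zero⟩))
      · right
        have h0 : wdeg (fun _ => (1:ℕ)) g = 0 := by omega
        exact isUnit_of_eq_C (K := K) hg0 (eq_C_of_wdeg_eq_zero (I := Unit) (w := fun _ => fun _ => 1)
          (fun _ => h0) (fun v => ⟨⟨⟩, one_ne_zero⟩))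
  · -- main case
    have hne : Nonempty ι := Fintype.card_pos_iff.mp (by omega)
    obtain ⟨i₁⟩ := hne
    -- there is an edge
    have hsing : ({i₁} : Finset ι) ≠ Finset.univ := fun h => by
      rw [← Finset.card_univ, ← h, Finset.card_singleton] at hcard
      omega
    have hedge : ∃ i j, E i j := by
      have := hhall {i₁} ⟨i₁, Finset.mem_singleton_self i₁⟩ hsing
      rw [Finset.card_singleton] at this
      have hpos : 0 < (Finset.univ.filter fun j => ∃ i ∈ ({i₁} : Finset ι), E i j).card := by
        omega
      obtain ⟨j, hj⟩ := Finset.card_pos.mp hpos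
      obtain ⟨i, hi, hij⟩ := (Finset.mem_filter.mp hj).2
      exact ⟨i, j, hij⟩
    obtain ⟨i₂, j₂, hE₂⟩ := hedge
    obtain ⟨σ₀, -, hσ₀⟩ := exists_matching E hhall hE₂
    have hdet0 : (edmondsMatrix K E).det ≠ 0 := det_ne_zero K E hσ₀
    refine ⟨hdet0, ?_, ?_⟩
    · -- not a unit
      intro hu
      obtain ⟨q, hq⟩ := hu.exists_right_inv
      have hq0 : q ≠ 0 := fun h => by simp [h] at hq
      have hdd := wdeg_mul (wrow i₁) hdet0 hq0
      rw [hq, wdeg_one, wdeg_row_det K E i₁ hdet0] at hdd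
      omega
    · intro f g hfg
      have hf0 : f ≠ 0 := fun h => hdet0 (by rw [hfg, h, zero_mul])
      have hg0 : g ≠ 0 := fun h => hdet0 (by rw [hfg, h, mul_zero])
      have hsumr : ∀ i, wdeg (wrow i) f + wdeg (wrow i) g = 1 := fun i => by
        rw [← wdeg_mul _ hf0 hg0, ← hfg, wdeg_row_det K E i hdet0]
      have hsumc : ∀ j, wdeg (wcol j) f + wdeg (wcol j) g = 1 := fun j => by
        rw [← wdeg_mul _ hf0 hg0, ← hfg, wdeg_col_det K E j hdet0]
      set A : Finset ι := Finset.univ.filter (fun i => wdeg (wrow i) f = 1) with hA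
      set Cc : Finset ι := Finset.univ.filter (fun j => wdeg (wcol j) f = 1) with hCc
      have hmemA : ∀ i, i ∈ A ↔ wdeg (wrow i) f = 1 := fun i => by
        simp [hA]
      have hmemC : ∀ j, j ∈ Cc ↔ wdeg (wcol j) f = 1 := fun j => by
        simp [hCc]
      have hAC : ∀ i j, E i j → (i ∈ A ↔ j ∈ Cc) := by
        intro i j hij
        obtain ⟨σ, hσj, hσ⟩ := exists_matching E hhall hij
        have hm : msig σ ∈ (f * g).support := by
          rw [← hfg]; exact msig_mem_support K E hσ
        obtain ⟨a, ha, b, hb, hab⟩ := Finset.mem_add.mp (support_mul f g hm)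
        have h1 : a (i, j) + b (i, j) = 1 := by
          have := DFunLike.congr_fun hab (i, j)
          rwa [Finsupp.add_apply, msig_apply, if_pos hσj] at this
        rcases Nat.eq_zero_or_pos (a (i, j)) with haz | hap
        · -- the variable occurs in g
          have hbp : b (i, j) ≠ 0 := by omega
          have hr := one_le_wdeg (w := wrow i) hb (by simp [wrow]) hbp
          have hc := one_le_wdeg (w := wcol j) hb (by simp [wcol]) hbp
          have hr' := hsumr i
          have hc' := hsumc j
          refine iff_of_false (fun hiA => ?_) (fun hjC => ?_)
          · rw [hmemA] at hiA; omega
          · rw [hmemC] at hjC; omega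
        · -- the variable occurs in f
          have hap' : a (i, j) ≠ 0 := by omega
          have hr := one_le_wdeg (w := wrow i) ha (by simp [wrow]) hap'
          have hc := one_le_wdeg (w := wcol j) ha (by simp [wcol]) hap'
          have hr' := hsumr i
          have hc' := hsumc j
          exact iff_of_true ((hmemA i).mpr (by omega)) ((hmemC j).mpr (by omega))
      have hcardeq : A.card = Cc.card := by
        have himg : A = Cc.image σ₀ := by
          ext i
          simp only [Finset.mem_image]
          constructor
          · intro hiA
            refine ⟨σ₀.symm i, ?_, Equiv.apply_symm_apply σ₀ i⟩
            have h := hAC (σ₀ (σ₀.symm i)) (σ₀.symm i) (hσ₀ (σ₀.symm i))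
            rw [Equiv.apply_symm_apply] at h
            exact h.mp hiA
          · rintro ⟨c, hc, rfl⟩
            exact (hAC (σ₀ c) c (hσ₀ c)).mpr hc
        rw [himg, Finset.card_image_of_injective _ σ₀.injective]
      rcases Finset.eq_empty_or_nonempty A with hA0 | hAne
      · -- f is constant
        left
        refine isUnit_of_eq_C (K := K) hf0 (eq_C_of_wdeg_eq_zero (I := ι) (w := wrow)
          (fun i => ?_) (fun v => ⟨v.1, by simp [wrow]⟩))
        have h1 : i ∉ A := by rw [hA0]; exact Finset.notMem_empty i
        rw [hmemA] at h1
        have := hsumr i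
        omega
      · by_cases hAu : A = Finset.univ
        · -- g is constant
          right
          refine isUnit_of_eq_C (K := K) hg0 (eq_C_of_wdeg_eq_zero (I := ι) (w := wrow)
            (fun i => ?_) (fun v => ⟨v.1, by simp [wrow]⟩))
          have h1 : i ∈ A := hAu ▸ Finset.mem_univ i
          rw [hmemA] at h1
          have := hsumr i
          omega
        · -- contradiction with strict Hall
          exfalso
          have hlt := hhall A hAne hAu
          have hsub : (Finset.univ.filter fun j => ∃ i ∈ A, E i j) ⊆ Cc := by
            intro j hj
            obtain ⟨i, hiA, hij⟩ := (Finset.mem_filter.mp hj).2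
            exact (hAC i j hij).mp hiA
          have := Finset.card_le_card hsub
          omega
end

section
/- Let G be a bipartite graph with parts V1 = {0,...,k} and V2 = {k+1,...,n}, with every vertex incident to at least one edge, and suppose G is connected. For each edge ij define a_{ij} = e_i + e_j in Z^{n+1}, where e_0,...,e_n are the standard basis vectors. Let φ : Z^{n+1} → Z be the linear functional φ = φ_0 + ... + φ_k − φ_{k+1} − ... − φ_n (sum of the first k+1 coordinates minus the remaining ones). Then the subgroup of Z^{n+1} generated by the vectors a_{ij} for ij ∈ E(G) equals Z^{n+1} ∩ Ker φ. -/
/-- Let `G` be a connected bipartite graph on vertex set `{0,…,n}` with parts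
`V1 = {0,…,k}` and `V2 = {k+1,…,n}` (so `k < n`), every vertex incident to at least
one edge. For each edge `ij` set `a_{ij} = e_i + e_j ∈ ℤ^{n+1}`. Then the subgroup
of `ℤ^{n+1}` generated by the vectors `a_{ij}` equals `ℤ^{n+1} ∩ Ker φ`, where
`φ(v) = Σ_{m ∈ V1} v_m − Σ_{m ∈ V2} v_m`. -/
theorem closure_edgeVectors_eq_ker_phi
    (n k : ℕ) (hk : k < n)
    (E : Fin (n + 1) → Fin (n + 1) → Prop)
    (hbip : ∀ i j, E i j → i.1 ≤ k ∧ k < j.1)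
    (hcov : ∀ v : Fin (n + 1), ∃ i j, E i j ∧ (v = i ∨ v = j))
    (hconn : (SimpleGraph.fromRel E).Connected) :
    ∀ v : Fin (n + 1) → ℤ,
      v ∈ AddSubgroup.closure
        {w : Fin (n + 1) → ℤ | ∃ i j, E i j ∧ w = Pi.single i 1 + Pi.single j 1} ↔
      (∑ m : Fin (n + 1), if m.1 ≤ k then v m else -v m) = 0 := by
  set S : Set (Fin (n+1) → ℤ) :=
    {w | ∃ i j, E i j ∧ w = Pi.single i 1 + Pi.single j 1} with hS
  set H := AddSubgroup.closure S with hHdef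
  let φ : (Fin (n + 1) → ℤ) →+ ℤ :=
  { toFun := fun v => ∑ m : Fin (n+1), if m.1 ≤ k then v m else -v m
    map_zero' := by simp
    map_add' := by
      intro a b
      rw [← Finset.sum_add_distrib]
      apply Finset.sum_congr rfl
      intro m _
      by_cases h : m.1 ≤ k <;> simp [h] <;> ring }
  have hφ_single : ∀ i : Fin (n+1), φ (Pi.single i 1) = if (i:ℕ) ≤ k then 1 else -1 := by
    intro i
    show (∑ m : Fin (n+1), if m.1 ≤ k then Pi.single i 1 m else -Pi.single i 1 m) = _
    rw [Finset.sum_eq_single i]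
    · simp
    · intro m _ hmi
      simp [Pi.single_eq_of_ne hmi]
    · simp
  have hHle : H ≤ φ.ker := by
    refine (AddSubgroup.closure_le _).2 ?_
    rintro w ⟨i, j, hij, rfl⟩
    obtain ⟨hi, hj⟩ := hbip i j hij
    have : φ (Pi.single i 1 + Pi.single j 1) = 0 := by
      rw [map_add, hφ_single, hφ_single, if_pos hi, if_neg (not_le.2 hj)]
      ring
    exact this
  let f : Fin (n+1) → (Fin (n+1) → ℤ) :=
    fun u => if (u:ℕ) ≤ k then Pi.single u 1 else -Pi.single u 1
  have hadj : ∀ u w, (SimpleGraph.fromRel E).Adj u w → f u - f w ∈ H := by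
    intro u w h
    obtain ⟨hne, h | h⟩ := h
    · obtain ⟨hu, hw⟩ := hbip u w h
      have heq : f u - f w = Pi.single u 1 + Pi.single w 1 := by
        simp only [f, if_pos hu, if_neg (not_le.2 hw)]
        abel
      rw [heq]
      exact AddSubgroup.subset_closure ⟨u, w, h, rfl⟩
    · obtain ⟨hw, hu⟩ := hbip w u h
      have heq : f u - f w = -(Pi.single w 1 + Pi.single u 1) := by
        simp only [f, if_pos hw, if_neg (not_le.2 hu)]
        abel
      rw [heq]
      exact neg_mem (AddSubgroup.subset_closure ⟨w, u, h, rfl⟩)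
  have hwalk : ∀ u w : Fin (n+1), (SimpleGraph.fromRel E).Walk u w → f u - f w ∈ H := by
    intro u w p
    induction p with
    | nil => simpa using zero_mem H
    | @cons a b c h p ih =>
      have h1 := hadj a b h
      have := add_mem h1 ih
      rwa [sub_add_sub_cancel] at this
  have hreach : ∀ m : Fin (n+1), f m - f (0 : Fin (n+1)) ∈ H := by
    intro m
    obtain ⟨p⟩ := hconn.preconnected m 0
    exact hwalk _ _ p
  intro v
  constructor
  · intro hv
    exact hHle hv
  · intro hv
    have h1 : v = ∑ m : Fin (n+1), (if m.1 ≤ k then v m else -v m) • f m := by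
      funext x
      rw [Finset.sum_apply]
      rw [Finset.sum_eq_single x]
      · by_cases hx : (x:ℕ) ≤ k <;> simp [f, hx]
      · intro m _ hmx
        by_cases hm : (m:ℕ) ≤ k <;>
          simp [f, hm, Pi.single_eq_of_ne (Ne.symm hmx)]
      · simp
    have key : v = ∑ m : Fin (n+1), (if m.1 ≤ k then v m else -v m) • (f m - f (0 : Fin (n+1))) := by
      have h2 : ∑ m : Fin (n+1), (if m.1 ≤ k then v m else -v m) • (f m - f (0 : Fin (n+1)))
          = (∑ m : Fin (n+1), (if m.1 ≤ k then v m else -v m) • f m)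
            - (∑ m : Fin (n+1), if m.1 ≤ k then v m else -v m) • f (0 : Fin (n+1)) := by
        rw [Finset.sum_smul, ← Finset.sum_sub_distrib]
        refine Finset.sum_congr rfl fun m _ => ?_
        rw [smul_sub]
      rw [h2, hv, zero_smul, sub_zero, ← h1]
    rw [key]
    exact sum_mem fun m _ => AddSubgroup.zsmul_mem _ (hreach m) _
end

section
/- Let G be a bipartite graph (parts V1, V2), with each vertex on at least one edge, and let P_G ⊂ R^{n+1} be the edge polytope, i.e., the convex hull of the vectors a_{ij} = e_i + e_j over all edges ij of G. For nonempty subsets I ⊆ V1 and J ⊆ V2 such that the induced subgraph G_{I∪J} has at least one edge, the convex hull Q_{I,J} of {a_{ij} : ij ∈ E(G_{I∪J})} is a face of P_G; explicitly, it is the face of P_G maximizing the linear functional φ_{I,J} = Σ_{i∈I} φ_i + Σ_{j∈J} φ_j, where φ_m is the m-th coordinate projection. -/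
/-!
On every vertex `a_{ij}` of `P_G` the functional `φ_{I,J}` is at most `2`, with equality exactly
for the vertices of `Q_{I,J}`. For any linear `f` bounded by `c` on a set `S`, the points of
`conv S` where `f` attains `c` form `conv {s ∈ S | f s = c}`: split `S` according to whether
`f s = c`; a point of `conv S` lies on a segment from the hull of the first part to the hull of the
second, where `f < c`, so `f = c` forces it to be the first endpoint.
-/

section ConvexHullFace

variable {𝕜 E : Type*} [Field 𝕜] [LinearOrder 𝕜] [IsStrictOrderedRing 𝕜]
  [AddCommGroup E] [Module 𝕜 E] {f : E →ₗ[𝕜] 𝕜} {S : Set E} {c : 𝕜}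

theorem LinearMap.eq_left_of_mem_segment {a b x : E} (hx : x ∈ segment 𝕜 a b)
    (ha : f a = c) (hb : f b < c) (hxc : f x = c) : x = a := by
  obtain ⟨p, q, -, hq, hpq, rfl⟩ := hx
  have hq0 : q = 0 := by
    have : q * (c - f b) = 0 := by
      rw [map_add, map_smul, map_smul, ha, smul_eq_mul, smul_eq_mul] at hxc
      linear_combination c * hpq - hxc
    exact (mul_eq_zero.1 this).resolve_right (sub_ne_zero.2 hb.ne')
  obtain rfl : p = 1 := by simpa [hq0] using hpq
  simp [hq0]

theorem convexHull_sep_eq_inter (hS : ∀ s ∈ S, f s ≤ c) :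
    convexHull 𝕜 {s ∈ S | f s = c} = convexHull 𝕜 S ∩ {x | f x = c} := by
  refine subset_antisymm (Set.subset_inter (convexHull_mono (Set.sep_subset _ _))
    (convexHull_min (fun s hs => hs.2) (convex_hyperplane f.isLinear c))) ?_
  rintro x ⟨hxS, hxc⟩
  set T := {s ∈ S | f s = c}
  set U := {s ∈ S | f s ≠ c}
  have hU : ∀ y ∈ convexHull 𝕜 U, f y < c :=
    convexHull_min (fun s hs => (hS s hs.1).lt_of_ne hs.2) (convex_halfSpace_lt f.isLinear c)
  have hTU : S = T ∪ U := by
    ext s; by_cases h : f s = c <;> simp [T, U, h]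
  rw [hTU] at hxS
  rcases U.eq_empty_or_nonempty with hU₀ | hU₀
  · simpa [hU₀] using hxS
  rcases T.eq_empty_or_nonempty with hT₀ | hT₀
  · rw [hT₀, Set.empty_union] at hxS
    exact absurd hxc (hU x hxS).ne
  rw [convexHull_union hT₀ hU₀] at hxS
  obtain ⟨t, ht, u, hu, hx⟩ := mem_convexJoin.1 hxS
  have htc : f t = c := convexHull_min (fun s hs => hs.2) (convex_hyperplane f.isLinear c) ht
  rwa [LinearMap.eq_left_of_mem_segment hx htc (hU u hu) hxc]

theorem convexHull_sep_eq_setOf_forall_le (hS : ∀ s ∈ S, f s ≤ c) (hc : ∃ s ∈ S, f s = c) :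
    convexHull 𝕜 {s ∈ S | f s = c} =
      {x ∈ convexHull 𝕜 S | ∀ y ∈ convexHull 𝕜 S, f y ≤ f x} := by
  have hle : ∀ y ∈ convexHull 𝕜 S, f y ≤ c :=
    convexHull_min hS (convex_halfSpace_le f.isLinear c)
  obtain ⟨s, hs, hsc⟩ := hc
  rw [convexHull_sep_eq_inter hS]
  ext x
  refine ⟨fun ⟨hx, hxc⟩ => ⟨hx, fun y hy => hxc ▸ hle y hy⟩, fun ⟨hx, hmax⟩ => ⟨hx, ?_⟩⟩
  exact (hle x hx).antisymm (hsc ▸ hmax s (subset_convexHull 𝕜 S hs))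

end ConvexHullFace

section EdgeVector

variable {ι 𝕜 : Type*} [DecidableEq ι] {I J : Finset ι} {i j : ι}

theorem Finset.sum_union_single_add_single [AddCommMonoidWithOne 𝕜] (hi : i ∉ J) (hj : j ∉ I) :
    ∑ m ∈ I ∪ J, (Pi.single i 1 + Pi.single j 1 : ι → 𝕜) m =
      (if i ∈ I then 1 else 0) + (if j ∈ J then 1 else 0) := by
  simp [Finset.sum_add_distrib, Finset.sum_pi_single', hi, hj]

variable [Semiring 𝕜] [PartialOrder 𝕜] [IsStrictOrderedRing 𝕜]

theorem Finset.sum_union_single_add_single_le_two (hi : i ∉ J) (hj : j ∉ I) :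
    ∑ m ∈ I ∪ J, (Pi.single i 1 + Pi.single j 1 : ι → 𝕜) m ≤ 2 := by
  rw [sum_union_single_add_single hi hj]
  split_ifs <;> norm_num

theorem Finset.sum_union_single_add_single_eq_two_iff (hi : i ∉ J) (hj : j ∉ I) :
    ∑ m ∈ I ∪ J, (Pi.single i 1 + Pi.single j 1 : ι → 𝕜) m = 2 ↔ i ∈ I ∧ j ∈ J := by
  rw [sum_union_single_add_single hi hj]
  split_ifs <;> norm_num [*]

end EdgeVector

theorem edgePolytope_face_of_induced_subgraph_general
    (n k : ℕ)
    (E : Fin (n + 1) → Fin (n + 1) → Prop)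
    (hbip : ∀ i j, E i j → i.1 ≤ k ∧ k < j.1)
    (I J : Finset (Fin (n + 1)))
    (hI : ∀ i ∈ I, i.1 ≤ k) (hJ : ∀ j ∈ J, k < j.1)
    (hedge : ∃ i ∈ I, ∃ j ∈ J, E i j) :
    convexHull ℝ {w : Fin (n + 1) → ℝ |
        ∃ i j, E i j ∧ i ∈ I ∧ j ∈ J ∧ w = Pi.single i 1 + Pi.single j 1} =
      {x ∈ convexHull ℝ {w : Fin (n + 1) → ℝ |
            ∃ i j, E i j ∧ w = Pi.single i 1 + Pi.single j 1} |
        ∀ y ∈ convexHull ℝ {w : Fin (n + 1) → ℝ |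
            ∃ i j, E i j ∧ w = Pi.single i 1 + Pi.single j 1},
          ∑ m ∈ I ∪ J, y m ≤ ∑ m ∈ I ∪ J, x m} := by
  set φ : (Fin (n + 1) → ℝ) →ₗ[ℝ] ℝ := ∑ m ∈ I ∪ J, LinearMap.proj m
  have hφ (x : Fin (n + 1) → ℝ) : φ x = ∑ m ∈ I ∪ J, x m := by simp [φ]
  have hsides {i j} (hij : E i j) : i ∉ J ∧ j ∉ I :=
    ⟨fun h => (hJ i h).not_ge (hbip i j hij).1, fun h => (hI j h).not_gt (hbip i j hij).2⟩
  have hle {i j} (hij : E i j) : φ (Pi.single i 1 + Pi.single j 1) ≤ 2 :=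
    hφ _ ▸ Finset.sum_union_single_add_single_le_two (hsides hij).1 (hsides hij).2
  have htwo {i j} (hij : E i j) : φ (Pi.single i 1 + Pi.single j 1) = 2 ↔ i ∈ I ∧ j ∈ J :=
    hφ _ ▸ Finset.sum_union_single_add_single_eq_two_iff (hsides hij).1 (hsides hij).2
  have hQ : {w : Fin (n + 1) → ℝ |
        ∃ i j, E i j ∧ i ∈ I ∧ j ∈ J ∧ w = Pi.single i 1 + Pi.single j 1} =
      {w ∈ {w : Fin (n + 1) → ℝ | ∃ i j, E i j ∧ w = Pi.single i 1 + Pi.single j 1} |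
        φ w = 2} := by
    ext w
    constructor
    · rintro ⟨i, j, hij, hi, hj, rfl⟩
      exact ⟨⟨i, j, hij, rfl⟩, (htwo hij).2 ⟨hi, hj⟩⟩
    · rintro ⟨⟨i, j, hij, rfl⟩, h2⟩
      obtain ⟨hi, hj⟩ := (htwo hij).1 h2
      exact ⟨i, j, hij, hi, hj, rfl⟩
  obtain ⟨i, hi, j, hj, hij⟩ := hedge
  simp only [← hφ]
  rw [hQ]
  refine convexHull_sep_eq_setOf_forall_le ?_ ⟨_, ⟨i, j, hij, rfl⟩, (htwo hij).2 ⟨hi, hj⟩⟩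
  rintro _ ⟨i, j, hij, rfl⟩
  exact hle hij

/-- Let `G` be a bipartite graph on `{0,…,n}` with parts `V1 = {m : m ≤ k}` and
`V2 = {m : k < m}`, every vertex lying on at least one edge, and let
`P_G ⊆ ℝ^{n+1}` be its edge polytope, the convex hull of the vectors
`a_{ij} = e_i + e_j` over edges `ij`. For nonempty `I ⊆ V1`, `J ⊆ V2` such that the
induced subgraph `G_{I∪J}` has at least one edge, the convex hull `Q_{I,J}` of
`{a_{ij} : ij ∈ E(G_{I∪J})}` is the face of `P_G` maximizing the linear functional
`φ_{I,J}(x) = Σ_{m ∈ I∪J} x_m`. -/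
theorem edgePolytope_face_of_induced_subgraph
    (n k : ℕ)
    (E : Fin (n + 1) → Fin (n + 1) → Prop)
    (hbip : ∀ i j, E i j → i.1 ≤ k ∧ k < j.1)
    (hcov : ∀ v : Fin (n + 1), ∃ i j, E i j ∧ (v = i ∨ v = j))
    (I J : Finset (Fin (n + 1)))
    (hI : ∀ i ∈ I, i.1 ≤ k) (hJ : ∀ j ∈ J, k < j.1)
    (hIne : I.Nonempty) (hJne : J.Nonempty)
    (hedge : ∃ i ∈ I, ∃ j ∈ J, E i j) :
    convexHull ℝ {w : Fin (n + 1) → ℝ |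
        ∃ i j, E i j ∧ i ∈ I ∧ j ∈ J ∧ w = Pi.single i 1 + Pi.single j 1} =
      {x ∈ convexHull ℝ {w : Fin (n + 1) → ℝ |
            ∃ i j, E i j ∧ w = Pi.single i 1 + Pi.single j 1} |
        ∀ y ∈ convexHull ℝ {w : Fin (n + 1) → ℝ |
            ∃ i j, E i j ∧ w = Pi.single i 1 + Pi.single j 1},
          ∑ m ∈ I ∪ J, y m ≤ ∑ m ∈ I ∪ J, x m} :=
  edgePolytope_face_of_induced_subgraph_general n k E hbip I J hI hJ hedge
end

section
/- Let G be a bipartite graph with |V1| = |V2| whose Edmonds matrix determinant det(z_G) is nonzero and irreducible, and let ij be an edge of G. Then the variable z_{ij} appears in det(z_G), i.e., the partial derivative ∂ det(z_G)/∂ z_{ij} is not the zero polynomial. -/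
open MvPolynomial
open Matrix

section Aux

variable {R : Type*} [CommRing R] {σ : Type*}

/-- The top homogeneous component of a nonzero polynomial is nonzero. -/
lemma top_homogeneousComponent_ne_zero (t : MvPolynomial σ R) (ht : t ≠ 0) :
    homogeneousComponent t.totalDegree t ≠ 0 := by
  classical
  have hsupp : t.support.Nonempty :=
    Finset.nonempty_iff_ne_empty.mpr (fun h => ht (MvPolynomial.support_eq_empty.mp h))
  obtain ⟨d, hd, hdeq⟩ := Finset.exists_mem_eq_sup t.support hsupp
    (fun s => s.sum fun _ e => e)
  have hdeg : d.degree = t.totalDegree := by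
    rw [MvPolynomial.totalDegree, hdeq]
    simp [Finsupp.degree, Finsupp.sum]
    rfl
  intro h0
  have : coeff d (homogeneousComponent t.totalDegree t) = 0 := by rw [h0]; simp
  rw [coeff_homogeneousComponent, if_pos hdeg] at this
  exact (MvPolynomial.mem_support_iff.mp hd) this

/-- A homogeneous polynomial of larger degree cannot divide a nonzero homogeneous
polynomial of smaller degree (over a domain). -/
lemma not_dvd_of_isHomogeneous_lt [IsDomain R] {p q : MvPolynomial σ R} {n m : ℕ}
    (hp : p.IsHomogeneous n) (hq : q.IsHomogeneous m) (hq0 : q ≠ 0) (hmn : m < n) :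
    ¬ p ∣ q := by
  classical
  rintro ⟨t, rfl⟩
  have hp0 : p ≠ 0 := left_ne_zero_of_mul hq0
  have ht0 : t ≠ 0 := right_ne_zero_of_mul hq0
  set E := t.totalDegree with hE
  have htE : homogeneousComponent E t ≠ 0 := top_homogeneousComponent_ne_zero t ht0
  have key : homogeneousComponent (n + E) (p * t) = p * homogeneousComponent E t := by
    conv_lhs => rw [← sum_homogeneousComponent t, Finset.mul_sum, map_sum]
    rw [Finset.sum_eq_single E]
    · have hmem : p * homogeneousComponent E t ∈ homogeneousSubmodule σ R (n + E) := by
        rw [mem_homogeneousSubmodule]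
        exact hp.mul (homogeneousComponent_isHomogeneous E t)
      rw [homogeneousComponent_of_mem hmem, if_pos rfl]
    · intro e _ hne
      have hmem : p * homogeneousComponent e t ∈ homogeneousSubmodule σ R (n + e) := by
        rw [mem_homogeneousSubmodule]
        exact hp.mul (homogeneousComponent_isHomogeneous e t)
      rw [homogeneousComponent_of_mem hmem, if_neg (by omega)]
    · intro h
      exact absurd (Finset.self_mem_range_succ E) h
  have hne : homogeneousComponent (n + E) (p * t) ≠ 0 := by
    rw [key]; exact mul_ne_zero hp0 htE
  have h1 : ¬ (p * t).totalDegree < n + E := fun hlt => hne (homogeneousComponent_eq_zero _ _ hlt)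
  have h2 : (p * t).totalDegree = m := hq.totalDegree hq0
  omega

variable {ι : Type*} [Fintype ι] [DecidableEq ι]

/-- The determinant of a matrix whose `k`-th row consists of homogeneous polynomials of
degree `w k` is homogeneous of degree `∑ k, w k`. -/
lemma det_isHomogeneous (A : Matrix ι ι (MvPolynomial σ R)) (w : ι → ℕ)
    (h : ∀ k l, (A k l).IsHomogeneous (w k)) :
    A.det.IsHomogeneous (∑ k, w k) := by
  classical
  rw [Matrix.det_apply]
  refine MvPolynomial.IsHomogeneous.sum _ _ _ (fun σ' _ => ?_)
  have hprod : (∏ k, A (σ' k) k).IsHomogeneous (∑ k, w (σ' k)) :=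
    MvPolynomial.IsHomogeneous.prod _ _ _ (fun k _ => h (σ' k) k)
  rw [Equiv.sum_comp σ' w] at hprod
  rcases Int.units_eq_one_or (Equiv.Perm.sign σ') with hs | hs <;> rw [hs]
  · simpa using hprod
  · simpa using hprod.neg

/-- The determinant of a matrix whose entries all lie in `MvPolynomial.supported R s`
lies in `MvPolynomial.supported R s`. -/
lemma det_mem_supported (A : Matrix ι ι (MvPolynomial σ R)) (s : Set σ)
    (h : ∀ k l, A k l ∈ supported R s) :
    A.det ∈ supported R s := by
  classical
  rw [Matrix.det_apply]
  refine Subalgebra.sum_mem _ (fun σ' _ => ?_)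
  have hprod : (∏ k, A (σ' k) k) ∈ supported R s :=
    Subalgebra.prod_mem _ (fun k _ => h (σ' k) k)
  rcases Int.units_eq_one_or (Equiv.Perm.sign σ') with hs | hs <;> rw [hs]
  · simpa using hprod
  · simpa using Subalgebra.neg_mem _ hprod

end Aux

section Edmonds

variable (K : Type) [Field K] {ι : Type} [Fintype ι] [DecidableEq ι]
  (E : ι → ι → Prop) [DecidableRel E]

lemma edmondsMatrix_entry_isHomogeneous (k l : ι) :
    ((edmondsMatrix K E) k l).IsHomogeneous 1 := by
  unfold edmondsMatrix
  by_cases h : E k l <;> simp only [Matrix.of_apply, if_pos, if_neg, h, ite_true, ite_false]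
  · exact isHomogeneous_X _ _
  · exact isHomogeneous_zero _ _ _

lemma edmondsMatrix_det_isHomogeneous :
    (edmondsMatrix K E).det.IsHomogeneous (Fintype.card ι) := by
  have := det_isHomogeneous (edmondsMatrix K E) (fun _ => 1)
    (fun k l => edmondsMatrix_entry_isHomogeneous K E k l)
  simpa using this

lemma edmondsMatrix_adjugate_isHomogeneous (i b : ι) :
    ((edmondsMatrix K E).adjugate b i).IsHomogeneous (Fintype.card ι - 1) := by
  classical
  rw [Matrix.adjugate_apply]
  have h : ∀ k l, (((edmondsMatrix K E).updateRow i (Pi.single b 1)) k l).IsHomogeneous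
      (if k = i then 0 else 1) := by
    intro k l
    rcases eq_or_ne k i with rfl | hk
    · rw [Matrix.updateRow_self, if_pos rfl]
      rcases eq_or_ne l b with rfl | hl
      · rw [Pi.single_eq_same]; exact isHomogeneous_one _ _
      · rw [Pi.single_eq_of_ne hl]; exact isHomogeneous_zero _ _ _
    · rw [Matrix.updateRow_ne hk, if_neg hk]
      exact edmondsMatrix_entry_isHomogeneous K E k l
  have := det_isHomogeneous _ _ h
  have hsum : (∑ k, if k = i then 0 else 1) = Fintype.card ι - 1 := by
    rw [← Finset.sum_erase_add _ _ (Finset.mem_univ i), if_pos rfl, add_zero]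
    rw [Finset.sum_ite_of_false (fun k hk => Finset.ne_of_mem_erase hk)]
    simp [Finset.card_erase_of_mem, Finset.card_univ]
  rwa [hsum] at this

lemma edmondsMatrix_adjugate_mem_supported (i b : ι) :
    (edmondsMatrix K E).adjugate b i ∈
      supported K {p : ι × ι | p.1 ≠ i} := by
  classical
  rw [Matrix.adjugate_apply]
  refine det_mem_supported _ _ (fun k l => ?_)
  rcases eq_or_ne k i with rfl | hk
  · rw [Matrix.updateRow_self]
    rcases eq_or_ne l b with rfl | hl
    · rw [Pi.single_eq_same]; exact Subalgebra.one_mem _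
    · rw [Pi.single_eq_of_ne hl]; exact Subalgebra.zero_mem _
  · rw [Matrix.updateRow_ne hk]
    unfold edmondsMatrix
    by_cases h : E k l <;> simp only [Matrix.of_apply, h, ite_true, ite_false]
    · rw [X_mem_supported]
      exact hk
    · exact Subalgebra.zero_mem _

lemma pderiv_edmondsMatrix_det (i j : ι) (hij : E i j) :
    MvPolynomial.pderiv (i, j) (edmondsMatrix K E).det
      = (edmondsMatrix K E).adjugate j i := by
  classical
  have hadj : ∀ b : ι, MvPolynomial.pderiv (i, j) ((edmondsMatrix K E).adjugate b i) = 0 := by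
    intro b
    refine pderiv_eq_zero_of_notMem_vars (fun hmem => ?_)
    have hsup := edmondsMatrix_adjugate_mem_supported K E i b
    rw [mem_supported] at hsup
    exact (hsup hmem) rfl
  rw [Matrix.det_eq_sum_mul_adjugate_row (edmondsMatrix K E) i, map_sum]
  have hterm : ∀ b : ι,
      MvPolynomial.pderiv (i, j) ((edmondsMatrix K E) i b * (edmondsMatrix K E).adjugate b i)
        = (if b = j then 1 else 0) * (edmondsMatrix K E).adjugate b i := by
    intro b
    rw [pderiv_mul, hadj b, mul_zero, add_zero]
    congr 1
    unfold edmondsMatrix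
    by_cases h : E i b <;> simp only [Matrix.of_apply, h, ite_true, ite_false]
    · rw [pderiv_X, Pi.single_apply]
      by_cases hb : b = j
      · subst hb; simp
      · rw [if_neg (by simp [hb]), if_neg hb]
    · have hbj : b ≠ j := fun hb => h (by rw [hb]; exact hij)
      rw [map_zero, if_neg hbj]
  calc (∑ b, MvPolynomial.pderiv (i, j)
          ((edmondsMatrix K E) i b * (edmondsMatrix K E).adjugate b i))
      = ∑ b, (if b = j then 1 else 0) * (edmondsMatrix K E).adjugate b i := by
        exact Finset.sum_congr rfl (fun b _ => hterm b)
    _ = (edmondsMatrix K E).adjugate j i := by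
        rw [Finset.sum_eq_single j]
        · simp
        · intro b _ hb; rw [if_neg hb, zero_mul]
        · intro h; exact absurd (Finset.mem_univ j) h

end Edmonds

set_option maxHeartbeats 1000000 in
/-- Let `G` be a bipartite graph with parts of equal size (both identified with `ι`)
whose Edmonds matrix determinant is nonzero and irreducible, and let `ij` be an edge
of `G`. Then the variable `z_{ij}` appears in `det(z_G)`, i.e. the partial derivative
`∂ det(z_G)/∂ z_{ij}` is not the zero polynomial. -/
theorem var_appears_in_edmonds_det
    (K : Type) [Field K] {ι : Type} [Fintype ι] [DecidableEq ι]
    (E : ι → ι → Prop) [DecidableRel E]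
    (hne : (edmondsMatrix K E).det ≠ 0)
    (hirr : Irreducible (edmondsMatrix K E).det)
    (i j : ι) (hij : E i j) :
    MvPolynomial.pderiv (i, j) (edmondsMatrix K E).det ≠ 0 := by
  classical
  rw [pderiv_edmondsMatrix_det K E i j hij]
  intro h0
  set M := edmondsMatrix K E with hM
  set P := M.det with hP
  -- `P` is prime
  have hprime : Prime P := hirr.prime
  -- `n ≥ 1`
  have hn : 1 ≤ Fintype.card ι := Fintype.card_pos_iff.mpr ⟨i⟩
  -- `P` does not divide any nonzero entry of the adjugate (degree reasons)
  have hndvd : ∀ b c : ι, M.adjugate b c ≠ 0 → ¬ P ∣ M.adjugate b c := by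
    intro b c hbc
    exact not_dvd_of_isHomogeneous_lt (edmondsMatrix_det_isHomogeneous K E)
      (edmondsMatrix_adjugate_isHomogeneous K E c b) hbc (by omega)
  -- find `j₀` with `adjugate M j₀ i ≠ 0` (row expansion)
  obtain ⟨j₀, hj₀⟩ : ∃ j₀, M.adjugate j₀ i ≠ 0 := by
    by_contra hcon
    push_neg at hcon
    apply hne
    rw [hP, Matrix.det_eq_sum_mul_adjugate_row M i]
    exact Finset.sum_eq_zero fun b _ => by rw [hcon b, mul_zero]
  -- find `i₀` with `adjugate M j i₀ ≠ 0` (column expansion)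
  obtain ⟨i₀, hi₀⟩ : ∃ i₀, M.adjugate j i₀ ≠ 0 := by
    by_contra hcon
    push_neg at hcon
    apply hne
    rw [hP, Matrix.det_eq_sum_mul_adjugate_col M j]
    exact Finset.sum_eq_zero fun b _ => by rw [hcon b, mul_zero]
  -- pass to the quotient by the prime ideal `(P)`
  have hPprime : (Ideal.span {P}).IsPrime := (Ideal.span_singleton_prime hne).mpr hprime
  haveI := hPprime
  set φ : MvPolynomial (ι × ι) K →+* MvPolynomial (ι × ι) K ⧸ Ideal.span {P} :=
    Ideal.Quotient.mk (Ideal.span {P}) with hφdef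
  have hφ : ∀ x : MvPolynomial (ι × ι) K, φ x = 0 ↔ P ∣ x := by
    intro x
    rw [hφdef, Ideal.Quotient.eq_zero_iff_mem, Ideal.mem_span_singleton]
  set N : Matrix ι ι (MvPolynomial (ι × ι) K ⧸ Ideal.span {P}) := φ.mapMatrix M with hNdef
  have hdetN : N.det = 0 := by
    show (φ.mapMatrix M).det = 0
    rw [← RingHom.map_det, ← hP]
    exact (hφ P).mpr dvd_rfl
  have hadjN : N.adjugate = φ.mapMatrix M.adjugate := by
    show (φ.mapMatrix M).adjugate = _
    rw [RingHom.map_adjugate]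
  -- the relevant adjugate entries in the quotient
  have haji : N.adjugate j i = 0 := by
    rw [hadjN]
    show φ (M.adjugate j i) = 0
    rw [h0, map_zero]
  have haj₀i : N.adjugate j₀ i ≠ 0 := by
    rw [hadjN]
    show φ (M.adjugate j₀ i) ≠ 0
    rw [Ne, hφ]
    exact hndvd j₀ i hj₀
  have haji₀ : N.adjugate j i₀ ≠ 0 := by
    rw [hadjN]
    show φ (M.adjugate j i₀) ≠ 0
    rw [Ne, hφ]
    exact hndvd j i₀ hi₀
  -- the kernel argument
  set Q : Matrix ι ι (MvPolynomial (ι × ι) K ⧸ Ideal.span {P}) := N.updateRow i (Pi.single j₀ 1) with hQ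
  have hdetQ : Q.det ≠ 0 := by
    rw [hQ, ← Matrix.adjugate_apply]
    exact haj₀i
  -- columns of the adjugate are in the kernel of `N`
  have hker : ∀ c : ι, N *ᵥ (fun r => N.adjugate r c) = 0 := by
    intro c
    funext k
    have : (N * N.adjugate) k c = 0 := by
      rw [Matrix.mul_adjugate, hdetN]
      simp
    simpa [Matrix.mul_apply, Matrix.mulVec, dotProduct] using this
  have hQcol : ∀ c : ι, Q *ᵥ (fun r => N.adjugate r c) = Pi.single i (N.adjugate j₀ c) := by
    intro c
    funext k
    rcases eq_or_ne k i with rfl | hk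
    · show (∑ l, Q k l * N.adjugate l c) = _
      rw [Pi.single_eq_same]
      rw [Finset.sum_eq_single j₀]
      · rw [hQ, Matrix.updateRow_self, Pi.single_eq_same, one_mul]
      · intro b _ hb
        rw [hQ, Matrix.updateRow_self, Pi.single_eq_of_ne hb, zero_mul]
      · intro h; exact absurd (Finset.mem_univ j₀) h
    · show (∑ l, Q k l * N.adjugate l c) = _
      rw [Pi.single_eq_of_ne hk]
      have := congrFun (hker c) k
      simp only [Matrix.mulVec, dotProduct, Pi.zero_apply] at this
      rw [← this]
      refine Finset.sum_congr rfl fun l _ => ?_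
      rw [hQ, Matrix.updateRow_ne hk]
  -- linear combination in the kernel of `Q`
  set v : ι → MvPolynomial (ι × ι) K ⧸ Ideal.span {P} :=
    fun r => N.adjugate j₀ i₀ * N.adjugate r i - N.adjugate j₀ i * N.adjugate r i₀ with hv
  have hQv : Q *ᵥ v = 0 := by
    funext k
    have h1 := congrFun (hQcol i) k
    have h2 := congrFun (hQcol i₀) k
    have expand : (Q *ᵥ v) k
        = N.adjugate j₀ i₀ * (Q *ᵥ fun r => N.adjugate r i) k
          - N.adjugate j₀ i * (Q *ᵥ fun r => N.adjugate r i₀) k := by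
      show (∑ l, Q k l * v l) = N.adjugate j₀ i₀ * (∑ l, Q k l * N.adjugate l i)
          - N.adjugate j₀ i * (∑ l, Q k l * N.adjugate l i₀)
      rw [Finset.mul_sum, Finset.mul_sum, ← Finset.sum_sub_distrib]
      refine Finset.sum_congr rfl fun l _ => ?_
      simp only [hv]
      ring
    rw [expand, h1, h2, Pi.zero_apply, Pi.single_apply, Pi.single_apply]
    by_cases hk : k = i <;> simp [hk] <;> ring
  have hv0 : v = 0 := Matrix.eq_zero_of_mulVec_eq_zero hdetQ hQv
  have hvj := congrFun hv0 j
  simp only [hv, Pi.zero_apply] at hvj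
  rw [haji, mul_zero, zero_sub, neg_eq_zero] at hvj
  exact (mul_ne_zero haj₀i haji₀) hvj
end
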